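/- If a sequence (C_i) in C(M) converges to C ∈ C(M) in the Chabauty topology, then d(C_i, C) → 0. -/

import Mathlib

open Metric Filter Set Topology

/-- The space of closed subsets of `M`. -/
abbrev ClosedSubsets (M : Type*) [MetricSpace M] := {A : Set M // IsClosed A}

/-- The truncated Hausdorff pseudo-distance `d_R(A,B) = min {1, d_Haus(A_R, B_R)}`,
where `A_R = A ∩ closedBall p R`, with the convention that the Hausdorff distance between
the empty set and a nonempty set is `+∞` (so the truncation gives `1`), and between two
empty sets is `0`. -/
noncomputable def dR {M : Type*} [MetricSpace M] (p : M) (R : ℝ) (A B : Set M) : ℝ :=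
  (min 1 (EMetric.hausdorffEdist (A ∩ closedBall p R) (B ∩ closedBall p R))).toReal

/-- `d(A,B) = ∫₀^∞ e^{-R} d_R(A,B) dR`. -/
noncomputable def dChab {M : Type*} [MetricSpace M] (p : M) (A B : Set M) : ℝ :=
  ∫ R in Ioi (0 : ℝ), Real.exp (-R) * dR p R A B

/-- The Chabauty topology on the space of closed subsets of `M`, generated by the sets
`{C | C ∩ K = ∅}` for `K` compact and `{C | C ∩ U ≠ ∅}` for `U` open. -/
def Chabauty (M : Type*) [MetricSpace M] : TopologicalSpace (ClosedSubsets M) :=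
  TopologicalSpace.generateFrom
    ({S | ∃ K : Set M, IsCompact K ∧ S = {C : ClosedSubsets M | C.1 ∩ K = ∅}} ∪
     {S | ∃ U : Set M, IsOpen U ∧ S = {C : ClosedSubsets M | (C.1 ∩ U).Nonempty}})

/-! The integrand `e^{-R} d_R(C_i, C)` is dominated by `e^{-R}`, so by dominated convergence it
suffices that `d_R(C_i, C) → 0` for almost every `R`. This holds whenever `C ∩ closedBall p R` lies
in the closure of `C ∩ ball p R`. Indeed, Chabauty convergence tested on the compact set of points
of `closedBall p R` at distance `≥ ε` from `C_R` keeps `(C_i)_R` within `ε` of `C_R`; tested on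
small balls around finitely many points of `C ∩ ball p R` that are `ε`-dense in `C_R`, it puts a
point of `(C_i)_R` near each point of `C_R`. The remaining radii form a countable set. -/

open MeasureTheory TopologicalSpace
open scoped ENNReal

section Chabauty

variable {M : Type*} [MetricSpace M] {ι : Type*} {l : Filter ι} {C : ι → ClosedSubsets M}
  {D : ClosedSubsets M}

lemma eventually_inter_eq_empty_of_tendsto_chabauty (h : Tendsto C l (@nhds _ (Chabauty M) D))
    {K : Set M} (hK : IsCompact K) (hDK : D.1 ∩ K = ∅) : ∀ᶠ i in l, (C i).1 ∩ K = ∅ :=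
  h <| @IsOpen.mem_nhds _ (Chabauty M) _ _
    (isOpen_generateFrom_of_mem (Or.inl ⟨K, hK, rfl⟩)) hDK

lemma eventually_inter_nonempty_of_tendsto_chabauty (h : Tendsto C l (@nhds _ (Chabauty M) D))
    {U : Set M} (hU : IsOpen U) (hDU : (D.1 ∩ U).Nonempty) :
    ∀ᶠ i in l, ((C i).1 ∩ U).Nonempty :=
  h <| @IsOpen.mem_nhds _ (Chabauty M) _ _
    (isOpen_generateFrom_of_mem (Or.inr ⟨U, hU, rfl⟩)) hDU

variable [ProperSpace M]

lemma eventually_infEDist_inter_closedBall_lt (h : Tendsto C l (@nhds _ (Chabauty M) D))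
    (p : M) (R : ℝ) {ε : ℝ≥0∞} (hε : 0 < ε) :
    ∀ᶠ i in l, ∀ x ∈ (C i).1 ∩ closedBall p R, infEDist x (D.1 ∩ closedBall p R) < ε := by
  set K := closedBall p R ∩ {x | ε ≤ infEDist x (D.1 ∩ closedBall p R)}
  have hK : IsCompact K :=
    (isCompact_closedBall p R).inter_right (isClosed_le continuous_const continuous_infEDist)
  have hDK : D.1 ∩ K = ∅ := by
    refine eq_empty_of_forall_notMem fun x ⟨hxD, hxR, hxε⟩ => ?_
    have hx0 : infEDist x (D.1 ∩ closedBall p R) = 0 := infEDist_zero_of_mem ⟨hxD, hxR⟩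
    exact hε.not_ge (hx0 ▸ hxε)
  filter_upwards [eventually_inter_eq_empty_of_tendsto_chabauty h hK hDK] with i hi x hx
  by_contra! hxε
  exact (eq_empty_iff_forall_notMem.1 hi) x ⟨hx.1, hx.2, hxε⟩

lemma eventually_infEDist_inter_closedBall_lt_of_subset_closure
    (h : Tendsto C l (@nhds _ (Chabauty M) D)) (p : M) {R : ℝ}
    (hR : D.1 ∩ closedBall p R ⊆ closure (D.1 ∩ ball p R)) {ε : ℝ≥0∞} (hε : 0 < ε) :
    ∀ᶠ i in l, ∀ z ∈ D.1 ∩ closedBall p R, infEDist z ((C i).1 ∩ closedBall p R) < ε := by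
  have hcover : D.1 ∩ closedBall p R ⊆ ⋃ y ∈ D.1 ∩ ball p R, eball y (ε / 2) := fun z hz => by
    obtain ⟨y, hy, hzy⟩ := EMetric.mem_closure_iff.1 (hR hz) (ε / 2) (ENNReal.half_pos hε.ne')
    exact mem_iUnion₂.2 ⟨y, hy, hzy⟩
  obtain ⟨t, htD, htfin, htcover⟩ := ((isCompact_closedBall p R).inter_left D.2)
    |>.elim_finite_subcover_image (fun _ _ => isOpen_eball) hcover
  have hnear : ∀ᶠ i in l, ∀ y ∈ t, ((C i).1 ∩ (eball y (ε / 2) ∩ ball p R)).Nonempty := by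
    rw [htfin.eventually_all]
    exact fun y hy => eventually_inter_nonempty_of_tendsto_chabauty h
      (isOpen_eball.inter isOpen_ball)
      ⟨y, (htD hy).1, mem_eball_self (ENNReal.half_pos hε.ne'), (htD hy).2⟩
  filter_upwards [hnear] with i hi z hz
  obtain ⟨y, hyt, hzy⟩ := mem_iUnion₂.1 (htcover hz)
  obtain ⟨w, hwC, hwy, hwp⟩ := hi y hyt
  calc infEDist z ((C i).1 ∩ closedBall p R)
      ≤ edist z w := infEDist_le_edist_of_mem ⟨hwC, ball_subset_closedBall hwp⟩
    _ ≤ edist z y + edist y w := edist_triangle z y w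
    _ < ε / 2 + ε / 2 := ENNReal.add_lt_add hzy (by rwa [edist_comm])
    _ = ε := ENNReal.add_halves ε

lemma tendsto_hausdorffEDist_inter_closedBall (h : Tendsto C l (@nhds _ (Chabauty M) D))
    (p : M) {R : ℝ} (hR : D.1 ∩ closedBall p R ⊆ closure (D.1 ∩ ball p R)) :
    Tendsto (fun i => hausdorffEDist ((C i).1 ∩ closedBall p R) (D.1 ∩ closedBall p R)) l
      (𝓝 0) := by
  refine ENNReal.tendsto_nhds_zero.2 fun ε hε => ?_
  filter_upwards [eventually_infEDist_inter_closedBall_lt h p R hε,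
    eventually_infEDist_inter_closedBall_lt_of_subset_closure h p hR hε] with i h₁ h₂
  exact hausdorffEDist_le_of_infEDist (fun x hx => (h₁ x hx).le) (fun z hz => (h₂ z hz).le)

lemma tendsto_dR_of_tendsto_chabauty (h : Tendsto C l (@nhds _ (Chabauty M) D))
    (p : M) {R : ℝ} (hR : D.1 ∩ closedBall p R ⊆ closure (D.1 ∩ ball p R)) :
    Tendsto (fun i => dR p R (C i).1 D.1) l (𝓝 0) := by
  have hmin := (tendsto_const_nhds (x := (1 : ℝ≥0∞))).min
    (tendsto_hausdorffEDist_inter_closedBall h p hR)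
  rw [min_eq_right zero_le] at hmin
  have := (ENNReal.tendsto_toReal ENNReal.zero_ne_top).comp hmin
  rwa [ENNReal.toReal_zero] at this

end Chabauty

section SeparableSpace

variable {M : Type*} [MetricSpace M] [SeparableSpace M]

-- For exceptional radii `R₁ < R₂`, the witness for `R₁` lies in `D ∩ ball p R₂` and so is far
-- from the witness for `R₂`; hence tagging each witness with a nearby point of a countable dense
-- set and its separation scale `2 / (m + 1)` is injective.
lemma countable_setOf_not_subset_closure_inter_ball (p : M) (D : Set M) :
    {R : ℝ | ¬ D ∩ closedBall p R ⊆ closure (D ∩ ball p R)}.Countable := by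
  set bad := {R : ℝ | ¬ D ∩ closedBall p R ⊆ closure (D ∩ ball p R)}
  obtain ⟨s, hs, hsd⟩ := exists_countable_dense M
  have hwitness : ∀ R ∈ bad,
      ∃ m : ℕ, ∃ y ∈ s, ∃ x ∈ D ∩ closedBall p R,
        dist x y < 1 / (m + 1) ∧ ∀ z ∈ D ∩ ball p R, 2 / (m + 1) ≤ dist x z := by
    intro R hR
    obtain ⟨x, hx, hxcl⟩ := not_subset.1 hR
    obtain ⟨ε, hε, hxε⟩ : ∃ ε > 0, ∀ z ∈ D ∩ ball p R, ε ≤ dist x z := by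
      simpa [Metric.mem_closure_iff] using hxcl
    obtain ⟨m, hm⟩ := exists_nat_one_div_lt (half_pos hε)
    obtain ⟨y, hys, hxy⟩ := hsd.exists_dist_lt x (Nat.one_div_pos_of_nat (n := m))
    refine ⟨m, y, hys, x, hx, hxy, fun z hz => le_trans ?_ (hxε z hz)⟩
    rw [div_eq_mul_one_div 2]
    linarith
  have : Nonempty M := ⟨p⟩
  choose! m y hys x hx hxy hsep using hwitness
  have hfar : ∀ R₁ ∈ bad, ∀ R₂ ∈ bad, R₁ < R₂ → (m R₁, y R₁) ≠ (m R₂, y R₂) := by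
    intro R₁ h₁ R₂ h₂ hlt heq
    obtain ⟨hm, hy⟩ : m R₁ = m R₂ ∧ y R₁ = y R₂ := Prod.ext_iff.1 heq
    have hmem : x R₁ ∈ D ∩ ball p R₂ :=
      ⟨(hx R₁ h₁).1, (mem_closedBall.1 (hx R₁ h₁).2).trans_lt hlt⟩
    have h₁y := hxy R₁ h₁
    rw [hm, hy] at h₁y
    have htwo : (2 : ℝ) / (m R₂ + 1) = 1 / (m R₂ + 1) + 1 / (m R₂ + 1) := by ring
    linarith [hsep R₂ h₂ _ hmem, hxy R₂ h₂, dist_triangle_right (x R₂) (x R₁) (y R₂)]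
  refine MapsTo.countable_of_injOn (f := fun R => (m R, y R)) (t := univ ×ˢ s)
    (fun R hR => ⟨trivial, hys R hR⟩) (fun R₁ h₁ R₂ h₂ heq => ?_) (countable_univ.prod hs)
  by_contra hne
  rcases lt_or_gt_of_ne hne with hlt | hlt
  · exact hfar R₁ h₁ R₂ h₂ hlt heq
  · exact hfar R₂ h₂ R₁ h₁ hlt heq.symm

end SeparableSpace

section Measurability

variable {M : Type*} [MetricSpace M] [ProperSpace M]

lemma infEDist_inter_closedBall_eq_iSup_rat {B : Set M} (hB : IsClosed B) (p x : M) (R : ℝ) :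
    infEDist x (B ∩ closedBall p R) = ⨆ (q : ℚ) (_ : R < q), infEDist x (B ∩ closedBall p q) := by
  refine le_antisymm ?_ (iSup₂_le fun q hq =>
    infEDist_anti (inter_subset_inter_right _ (closedBall_subset_closedBall hq.le)))
  set L := ⨆ (q : ℚ) (_ : R < q), infEDist x (B ∩ closedBall p q)
  rcases eq_or_ne L ⊤ with hL | hL
  · exact hL ▸ le_top
  let K : {q : ℚ // R < q} → Set M := fun q => B ∩ closedBall p q ∩ closedEBall x L
  have hK_compact : ∀ q, IsCompact (K q) := fun q =>
    ((isCompact_closedBall p q).inter_left hB).inter_right isClosed_closedEBall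
  have hK_nonempty : ∀ q, (K q).Nonempty := by
    intro q
    have hle : infEDist x (B ∩ closedBall p q) ≤ L :=
      le_iSup₂ (f := fun (q : ℚ) (_ : R < q) => infEDist x (B ∩ closedBall p q)) q.1 q.2
    have hne : (B ∩ closedBall p q).Nonempty := by
      by_contra! hempty
      rw [hempty, infEDist_empty, top_le_iff] at hle
      exact hL hle
    obtain ⟨y, hy, hxy⟩ :=
      ((isCompact_closedBall p q).inter_left hB).exists_infEDist_eq_edist hne x
    exact ⟨y, hy, by rw [mem_closedEBall, edist_comm, ← hxy]; exact hle⟩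
  have hK_mono : ∀ q₁ q₂ : {q : ℚ // R < q}, q₁.1 ≤ q₂.1 → K q₁ ⊆ K q₂ := fun q₁ q₂ h =>
    inter_subset_inter_left _ (inter_subset_inter_right _
      (closedBall_subset_closedBall (by exact_mod_cast h)))
  have hK_directed : Directed (· ⊇ ·) K := fun q₁ q₂ =>
    ⟨⟨min q₁.1 q₂.1, by push_cast; exact lt_min q₁.2 q₂.2⟩,
      hK_mono _ _ (min_le_left _ _), hK_mono _ _ (min_le_right _ _)⟩
  obtain ⟨q₀, hq₀⟩ := exists_rat_gt R
  have : Nonempty {q : ℚ // R < q} := ⟨⟨q₀, hq₀⟩⟩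
  obtain ⟨y, hy⟩ := IsCompact.nonempty_iInter_of_directed_nonempty_isCompact_isClosed K
    hK_directed hK_nonempty hK_compact fun q => (hK_compact q).isClosed
  rw [mem_iInter] at hy
  have hyR : dist y p ≤ R := le_of_forall_lt_rat_imp_le fun q hq => (hy ⟨q, hq⟩).1.2
  calc infEDist x (B ∩ closedBall p R)
      ≤ edist x y := infEDist_le_edist_of_mem ⟨(hy ⟨q₀, hq₀⟩).1.1, hyR⟩
    _ ≤ L := by rw [edist_comm]; exact (hy ⟨q₀, hq₀⟩).2

lemma measurable_iSup_infEDist_inter_closedBall (p : M) (A : Set M) {B : Set M}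
    (hB : IsClosed B) :
    Measurable fun R : ℝ => ⨆ y ∈ A ∩ closedBall p R, infEDist y (B ∩ closedBall p R) := by
  have hrat : ∀ R : ℝ, ⨆ y ∈ A ∩ closedBall p R, infEDist y (B ∩ closedBall p R)
      = ⨆ (q : ℚ) (_ : R < q), ⨆ y ∈ A ∩ closedBall p R, infEDist y (B ∩ closedBall p q) := by
    intro R
    rw [biSup_congr fun y _ => infEDist_inter_closedBall_eq_iSup_rat hB p y R]
    exact iSup₂_comm _
  simp_rw [hrat, iSup_eq_if]
  refine Measurable.iSup fun q => Measurable.ite measurableSet_Iio ?_ measurable_const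
  exact Monotone.measurable fun R₁ R₂ h =>
    biSup_mono (inter_subset_inter_right _ (closedBall_subset_closedBall h))

lemma measurable_dR (p : M) {A B : Set M} (hA : IsClosed A) (hB : IsClosed B) :
    Measurable fun R : ℝ => dR p R A B := by
  refine (measurable_const.min (?_ : Measurable fun R : ℝ =>
    hausdorffEDist (A ∩ closedBall p R) (B ∩ closedBall p R))).ennreal_toReal
  simp only [hausdorffEDist_def]
  exact (measurable_iSup_infEDist_inter_closedBall p A hB).sup
    (measurable_iSup_infEDist_inter_closedBall p B hA)

end Measurability

section Integral

variable {M : Type*} [MetricSpace M]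

lemma dR_nonneg (p : M) (R : ℝ) (A B : Set M) : 0 ≤ dR p R A B := ENNReal.toReal_nonneg

lemma dR_le_one (p : M) (R : ℝ) (A B : Set M) : dR p R A B ≤ 1 :=
  (ENNReal.toReal_mono ENNReal.one_ne_top (min_le_left 1 _)).trans_eq ENNReal.toReal_one

lemma tendsto_dChab_of_ae_tendsto_dR [ProperSpace M] {ι : Type*} {l : Filter ι}
    [l.IsCountablyGenerated] (p : M) {A : ι → Set M} {B : Set M} (hA : ∀ i, IsClosed (A i))
    (hB : IsClosed B) (h : ∀ᵐ R, Tendsto (fun i => dR p R (A i) B) l (𝓝 0)) :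
    Tendsto (fun i => dChab p (A i) B) l (𝓝 0) := by
  have hbound : ∀ i R, ‖Real.exp (-R) * dR p R (A i) B‖ ≤ Real.exp (-R) := fun i R => by
    rw [norm_mul, Real.norm_of_nonneg (Real.exp_pos _).le, Real.norm_of_nonneg (dR_nonneg ..)]
    exact mul_le_of_le_one_right (Real.exp_pos _).le (dR_le_one ..)
  have := tendsto_integral_filter_of_dominated_convergence (μ := volume.restrict (Ioi 0))
    (fun R => Real.exp (-R))
    (Eventually.of_forall fun i => ((Real.continuous_exp.comp continuous_neg).measurable.mul
      (measurable_dR p (hA i) hB)).aestronglyMeasurable)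
    (Eventually.of_forall fun i => Eventually.of_forall (hbound i))
    (integrableOn_exp_neg_Ioi 0)
    (ae_restrict_of_ae (h.mono fun R hR => by simpa using hR.const_mul (Real.exp (-R))))
  rwa [integral_zero] at this

end Integral

/-- If `C_i → C` in the Chabauty topology, then `d(C_i, C) → 0`. -/
theorem dChab_tendsto_of_chabauty (M : Type*) [MetricSpace M] [ProperSpace M] (p : M)
    (C : ℕ → ClosedSubsets M) (D : ClosedSubsets M)
    (h : Tendsto C atTop (@nhds _ (Chabauty M) D)) :
    Tendsto (fun i => dChab p (C i).1 D.1) atTop (nhds 0) := by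
  refine tendsto_dChab_of_ae_tendsto_dR p (fun i => (C i).2) D.2 ?_
  filter_upwards [(countable_setOf_not_subset_closure_inter_ball p D.1).ae_notMem volume]
    with R hR
  exact tendsto_dR_of_tendsto_chabauty h p (not_not.1 hR)
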